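/- arXiv:math/0111042 — 2 statements merged into one kernel-verified Lean document; each statement's English description precedes it below -/
import Mathlib

section
/- Let B be a unital complex *-algebra and S ⊆ B a subset such that the smallest star-subalgebra of B containing S ∪ {1} is B itself. Let φ : B → B be a unital algebra homomorphism satisfying φ(φ(b*)*) = b for all b ∈ B. Assume that for every b ∈ S there exists a function f : ℂ → B of finite exponential type with f(n·i) = φⁿ(b) for every natural number n. Then there exists a unique exponential one-parameter group β on B with β_i = φ. -/
/-
Carlson-type uniqueness: if `f` is entire with `‖f z‖ ≤ M exp (r |Im z|)` and `f (n i) = 0` for all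
`n : ℕ`, then `p z = f (z i) exp (-r z)` is bounded on the closed right half-plane and vanishes on
`ℕ`. Phragmén–Lindelöf applied to `p z ∏ (z + n) / (z - n)` gives
`|p σ| ≤ M ∏ (n - σ) / (n + σ) ≤ M / (2N + 1)` for `σ ∈ (1/2, 1)`, so `p = 0`.
Hence an interpolant of finite exponential type of an orbit `n ↦ φⁿ b` is unique. Uniqueness makes
`b ↦ F_b z` additive and multiplicative, gives `F_{F_b z} w = F_b (w + z)`, and, because
`φ (φ (b*)*) = b`, also `F_{b*} z = (F_b (conj z))*`. In particular the elements admitting an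
interpolant form a star-subalgebra; it contains `S`, so it is everything, and `β z b = F_b z` is the
required group. Any exponential group `β` with `β i = φ` interpolates the orbits, whence uniqueness.
-/

/-- A function `f : ℂ → ℂ` is of exponential type: it is entire and satisfies a bound
`|f z| ≤ M * exp (r * |Im z|)`. -/
def ExpType (f : ℂ → ℂ) : Prop :=
  Differentiable ℂ f ∧
    ∃ M r : ℝ, 0 < M ∧ 0 < r ∧ ∀ z : ℂ, ‖f z‖ ≤ M * Real.exp (r * |z.im|)

/-- A function from `ℂ` into a complex vector space `V` is of finite exponential type if it is a
finite linear combination of functions of exponential type with coefficients in `V`. -/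
def FinExpType {V : Type*} [AddCommGroup V] [Module ℂ V] (f : ℂ → V) : Prop :=
  ∃ (n : ℕ) (v : Fin n → V) (g : Fin n → ℂ → ℂ),
    (∀ j, ExpType (g j)) ∧ ∀ z : ℂ, f z = ∑ j, g j z • v j

/-- A one-parameter group on a unital complex *-algebra `B`: a family of algebra automorphisms
`β z` with `β (y + z) = β y ∘ β z` and `star (β z b) = β (conj z) (star b)`. -/
def IsOneParamGroup {B : Type*} [Ring B] [Algebra ℂ B] [StarRing B] [StarModule ℂ B]
    (β : ℂ → (B ≃ₐ[ℂ] B)) : Prop :=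
  (∀ y z : ℂ, ∀ b : B, β (y + z) b = β y (β z b)) ∧
    (∀ z : ℂ, ∀ b : B, star (β z b) = β (starRingEnd ℂ z) (star b))

/-- An exponential one-parameter group: a one-parameter group such that `z ↦ β z b` is of finite
exponential type for every `b`. -/
def IsExpOneParamGroup {B : Type*} [Ring B] [Algebra ℂ B] [StarRing B] [StarModule ℂ B]
    (β : ℂ → (B ≃ₐ[ℂ] B)) : Prop :=
  IsOneParamGroup β ∧ ∀ b : B, FinExpType (fun z => β z b)

open Complex Filter Finset Topology
open scoped ComplexConjugate

theorem Differentiable.exists_eq_prod_sub_mul {f : ℂ → ℂ} (hf : Differentiable ℂ f)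
    {s : Finset ℂ} (hs : ∀ a ∈ s, f a = 0) :
    ∃ g : ℂ → ℂ, Differentiable ℂ g ∧ ∀ z, f z = (∏ a ∈ s, (z - a)) * g z := by
  classical
  induction s using Finset.induction_on with
  | empty => exact ⟨f, hf, by simp⟩
  | insert a s ha ih =>
    obtain ⟨q, hq, hfq⟩ := ih fun b hb => hs b (mem_insert_of_mem hb)
    have hqa : q a = 0 := by
      have hprod : ∏ b ∈ s, (a - b) ≠ 0 :=
        prod_ne_zero_iff.2 fun b hb => sub_ne_zero.2 fun h => ha (h ▸ hb)
      simpa [hprod, hs a (mem_insert_self a s)] using (hfq a).symm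
    refine ⟨dslope q a, ?_, fun z => ?_⟩
    · rw [← differentiableOn_univ]
      exact (Complex.differentiableOn_dslope univ_mem).2 hq.differentiableOn
    · rw [hfq, prod_insert ha, mul_comm (z - a), mul_assoc, ← smul_eq_mul (z - a),
        sub_smul_dslope, hqa, sub_zero]

lemma norm_I_mul_sub_ofReal (y a : ℝ) : ‖y * I - a‖ = ‖y * I + a‖ := by
  rw [← norm_neg, ← norm_conj]
  congr 1
  simp only [map_neg, map_sub, map_mul, conj_ofReal, conj_I]
  ring

lemma prod_norm_add_ofReal_le_three_pow_mul {s : Finset ℝ} (hs : ∀ a ∈ s, 0 ≤ a) {z : ℂ}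
    (hz : ∀ a ∈ s, 2 * a ≤ ‖z‖) :
    ∏ a ∈ s, ‖z + a‖ ≤ 3 ^ s.card * ∏ a ∈ s, ‖z - a‖ := by
  rw [← prod_const, ← prod_mul_distrib]
  refine prod_le_prod (fun _ _ => norm_nonneg _) fun a ha => ?_
  have h1 := norm_add_le z a
  have h2 := norm_sub_norm_le z a
  rw [norm_real, Real.norm_of_nonneg (hs a ha)] at h1 h2
  linarith [hz a ha]

theorem norm_mul_prod_add_le_of_bounded_on_re_nonneg {p : ℂ → ℂ} {M : ℝ}
    (hp : Differentiable ℂ p) (hM : ∀ z : ℂ, 0 ≤ z.re → ‖p z‖ ≤ M) {s : Finset ℝ}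
    (hs : ∀ a ∈ s, 0 < a) (hzero : ∀ a ∈ s, p a = 0) {z : ℂ} (hz : 0 ≤ z.re) :
    ‖p z‖ * ∏ a ∈ s, ‖z + a‖ ≤ M * ∏ a ∈ s, ‖z - a‖ := by
  obtain ⟨q, hq, hpq⟩ := hp.exists_eq_prod_sub_mul (s := s.map ⟨ofReal, ofReal_injective⟩)
    (forall_mem_map.2 hzero)
  simp only [prod_map, Function.Embedding.coeFn_mk] at hpq
  -- `G = p ∏ (z + a) / (z - a)` has the modulus of `p` on the imaginary axis
  set G : ℂ → ℂ := fun z => q z * ∏ a ∈ s, (z + a)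
  have hG : ∀ z, ‖G z‖ * ∏ a ∈ s, ‖z - a‖ = ‖p z‖ * ∏ a ∈ s, ‖z + a‖ := fun z => by
    simp only [G, hpq, ← norm_prod, ← norm_mul]
    ring_nf
  have him : ∀ y : ℝ, ‖G (y * I)‖ ≤ M := fun y => by
    have hsym : ∏ a ∈ s, ‖y * I - a‖ = ∏ a ∈ s, ‖y * I + a‖ :=
      prod_congr rfl fun a _ => norm_I_mul_sub_ofReal y a
    have hne : ∏ a ∈ s, ‖y * I - a‖ ≠ 0 := prod_ne_zero_iff.2 fun a ha h => by
      simpa [(hs a ha).ne'] using congrArg re (norm_eq_zero.1 h)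
    have h := hG (y * I)
    rw [hsym] at h hne
    rw [mul_right_cancel₀ hne h]
    exact hM _ (by simp)
  set R := 2 * ∑ a ∈ s, a
  have hlarge : ∀ z : ℂ, 0 ≤ z.re → R ≤ ‖z‖ → ‖G z‖ ≤ 3 ^ s.card * M := by
    intro z hz hR
    have hzs : ∀ a ∈ s, 2 * a ≤ ‖z‖ := fun a ha =>
      (mul_le_mul_of_nonneg_left (single_le_sum (fun b hb => (hs b hb).le) ha) two_pos.le).trans hR
    have hpos : 0 < ∏ a ∈ s, ‖z - a‖ := prod_pos fun a ha => by
      have h := norm_sub_norm_le z a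
      rw [norm_real, Real.norm_of_nonneg (hs a ha).le] at h
      linarith [hzs a ha, hs a ha]
    refine le_of_mul_le_mul_right ?_ hpos
    calc ‖G z‖ * ∏ a ∈ s, ‖z - a‖ = ‖p z‖ * ∏ a ∈ s, ‖z + a‖ := hG z
      _ ≤ M * (3 ^ s.card * ∏ a ∈ s, ‖z - a‖) :=
        mul_le_mul (hM z hz) (prod_norm_add_ofReal_le_three_pow_mul (fun a ha => (hs a ha).le) hzs)
          (prod_nonneg fun _ _ => norm_nonneg _) ((norm_nonneg _).trans (hM 0 le_rfl))
      _ = 3 ^ s.card * M * ∏ a ∈ s, ‖z - a‖ := by ring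
  have hPL : ‖G z‖ ≤ M := by
    refine PhragmenLindelof.right_half_plane_of_bounded_on_real
      (hq.mul (by fun_prop)).diffContOnCl ⟨0, two_pos, 0, ?_⟩ ?_ him hz
    · simp only [zero_mul, Real.exp_zero]
      refine (Asymptotics.isBigO_one_iff ℝ).2
        (isBoundedUnder_of_eventually_le (a := 3 ^ s.card * M) ?_)
      rw [eventually_inf_principal]
      filter_upwards [tendsto_norm_cobounded_atTop.eventually_ge_atTop R] with w hw hre
      exact hlarge w hre.le hw
    · refine isBoundedUnder_of_eventually_le (a := 3 ^ s.card * M) ?_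
      filter_upwards [eventually_ge_atTop R, eventually_ge_atTop 0] with x hx hx0
      exact hlarge x (by simpa using hx0) (by rwa [norm_real, Real.norm_of_nonneg hx0])
  rw [← hG]
  exact mul_le_mul_of_nonneg_right hPL (prod_nonneg fun _ _ => norm_nonneg _)

lemma two_mul_add_one_mul_prod_sub_le_prod_add {σ : ℝ} (h1 : 1 / 2 ≤ σ) (h2 : σ < 1) (N : ℕ) :
    (2 * N + 1) * ∏ n ∈ Icc 1 N, ((n : ℝ) - σ) ≤ ∏ n ∈ Icc 1 N, ((n : ℝ) + σ) := by
  induction N with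
  | zero => simp
  | succ N ih =>
    rw [prod_Icc_succ_top (by omega), prod_Icc_succ_top (by omega)]
    have hP : 0 ≤ ∏ n ∈ Icc 1 N, ((n : ℝ) - σ) := prod_nonneg fun n hn => by
      have : (1 : ℝ) ≤ n := by exact_mod_cast (mem_Icc.1 hn).1
      linarith
    have hstep : (2 * (N + 1) + 1) * ((N + 1 : ℝ) - σ) ≤ (2 * N + 1) * ((N + 1 : ℝ) + σ) := by
      nlinarith
    push_cast
    nlinarith [mul_le_mul_of_nonneg_right hstep hP,
      mul_le_mul_of_nonneg_left ih (by positivity : (0 : ℝ) ≤ N + 1 + σ)]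

lemma Differentiable.eq_zero_of_eqOn_Ioo {p : ℂ → ℂ} (hp : Differentiable ℂ p) {a b : ℝ}
    (hab : a < b) (h : ∀ x ∈ Set.Ioo a b, p x = 0) : p = 0 := by
  obtain ⟨c, hac, hcb⟩ := exists_between hab
  have htend : Tendsto ofReal (𝓝[≠] c) (𝓝[≠] (c : ℂ)) :=
    tendsto_nhdsWithin_of_tendsto_nhds_of_eventually_within _
      (continuous_ofReal.continuousAt.tendsto.mono_left nhdsWithin_le_nhds)
      (eventually_nhdsWithin_of_forall fun x hx => by simpa using hx)
  have hfreq : ∃ᶠ z in 𝓝[≠] (c : ℂ), p z = 0 :=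
    htend.frequently
      ((eventually_nhdsWithin_of_eventually_nhds (Ioo_mem_nhds hac hcb)).mono h).frequently
  funext z
  exact (analyticOnNhd_univ_iff_differentiable.2 hp).eqOn_zero_of_preconnected_of_frequently_eq_zero
    isPreconnected_univ (Set.mem_univ _) hfreq (Set.mem_univ z)

lemma Differentiable.two_mul_add_one_mul_norm_le_of_bounded_on_re_nonneg {p : ℂ → ℂ} {M : ℝ}
    (hp : Differentiable ℂ p) (hM : ∀ z : ℂ, 0 ≤ z.re → ‖p z‖ ≤ M) (h0 : ∀ n : ℕ, p n = 0)
    {σ : ℝ} (hσ₁ : 1 / 2 ≤ σ) (hσ₂ : σ < 1) (N : ℕ) : (2 * N + 1) * ‖p σ‖ ≤ M := by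
  have hB := norm_mul_prod_add_le_of_bounded_on_re_nonneg hp hM
    (s := (Icc 1 N).map Nat.castEmbedding)
    (forall_mem_map.2 fun n hn => Nat.cast_pos.2 (mem_Icc.1 hn).1)
    (forall_mem_map.2 fun n _ => by simpa using h0 n) (z := σ) (by simp; linarith)
  simp only [prod_map, Nat.castEmbedding_apply, ← ofReal_add, ← ofReal_sub, norm_real,
    Real.norm_eq_abs] at hB
  have hsub : ∏ n ∈ Icc 1 N, |σ - n| = ∏ n ∈ Icc 1 N, ((n : ℝ) - σ) :=
    prod_congr rfl fun n hn => by
      have : (1 : ℝ) ≤ n := by exact_mod_cast (mem_Icc.1 hn).1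
      rw [abs_sub_comm, abs_of_nonneg (by linarith)]
  have hadd : ∏ n ∈ Icc 1 N, |σ + n| = ∏ n ∈ Icc 1 N, ((n : ℝ) + σ) :=
    prod_congr rfl fun n _ => by rw [abs_of_pos (by positivity), add_comm]
  rw [hsub, hadd] at hB
  have hQ : 0 < ∏ n ∈ Icc 1 N, ((n : ℝ) + σ) := prod_pos fun n _ => by positivity
  have hM0 : 0 ≤ M := (norm_nonneg _).trans (hM 0 le_rfl)
  refine le_of_mul_le_mul_right ?_ hQ
  nlinarith [mul_le_mul_of_nonneg_left hB (by positivity : (0 : ℝ) ≤ 2 * N + 1),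
    mul_le_mul_of_nonneg_left (two_mul_add_one_mul_prod_sub_le_prod_add hσ₁ hσ₂ N) hM0]

theorem Differentiable.eq_zero_of_bounded_on_re_nonneg {p : ℂ → ℂ} {M : ℝ}
    (hp : Differentiable ℂ p) (hM : ∀ z : ℂ, 0 ≤ z.re → ‖p z‖ ≤ M) (h0 : ∀ n : ℕ, p n = 0) :
    p = 0 := by
  refine hp.eq_zero_of_eqOn_Ioo (by norm_num : (1 / 2 : ℝ) < 1) fun σ ⟨hσ₁, hσ₂⟩ => ?_
  by_contra hne
  obtain ⟨N, hN⟩ := exists_nat_gt (M / ‖p σ‖)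
  rw [div_lt_iff₀ (norm_pos_iff.2 hne)] at hN
  nlinarith [hp.two_mul_add_one_mul_norm_le_of_bounded_on_re_nonneg hM h0 hσ₁.le hσ₂ N,
    norm_nonneg (p σ)]

namespace ExpType

theorem eq_zero_of_apply_nat_mul_I {f : ℂ → ℂ} (hf : ExpType f)
    (h0 : ∀ n : ℕ, f (n * I) = 0) : f = 0 := by
  obtain ⟨hd, M, r, -, hr, hb⟩ := hf
  have hp : (fun z => f (z * I) * cexp (-r * z)) = 0 := by
    refine Differentiable.eq_zero_of_bounded_on_re_nonneg (M := M) (by fun_prop)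
      (fun z hz => ?_) fun n => by simp [h0]
    calc ‖f (z * I) * cexp (-r * z)‖ ≤ M * Real.exp (r * z.re) * Real.exp (-(r * z.re)) := by
          rw [norm_mul, norm_exp]
          simpa [abs_of_nonneg hz] using
            mul_le_mul_of_nonneg_right (hb (z * I)) (Real.exp_pos (-(r * z.re))).le
      _ = M := by rw [mul_assoc, ← Real.exp_add, add_neg_cancel, Real.exp_zero, mul_one]
  funext w
  have hw := congrFun hp (w / I)
  rwa [Pi.zero_apply, div_mul_cancel₀ w I_ne_zero, mul_eq_zero,
    or_iff_left (exp_ne_zero _)] at hw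

lemma const (c : ℂ) : ExpType fun _ => c :=
  ⟨differentiable_const c, ‖c‖ + 1, 1, by positivity, one_pos, fun z => by
    nlinarith [Real.one_le_exp (mul_nonneg zero_le_one (abs_nonneg z.im)), norm_nonneg c]⟩

lemma add {f g : ℂ → ℂ} (hf : ExpType f) (hg : ExpType g) : ExpType fun z => f z + g z := by
  obtain ⟨hfd, M₁, r₁, hM₁, hr₁, hb₁⟩ := hf
  obtain ⟨hgd, M₂, r₂, hM₂, hr₂, hb₂⟩ := hg
  refine ⟨hfd.add hgd, M₁ + M₂, max r₁ r₂, by positivity, lt_max_of_lt_left hr₁, fun z => ?_⟩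
  have e₁ : Real.exp (r₁ * |z.im|) ≤ Real.exp (max r₁ r₂ * |z.im|) := by
    gcongr; exact le_max_left _ _
  have e₂ : Real.exp (r₂ * |z.im|) ≤ Real.exp (max r₁ r₂ * |z.im|) := by
    gcongr; exact le_max_right _ _
  calc ‖f z + g z‖ ≤ M₁ * Real.exp (r₁ * |z.im|) + M₂ * Real.exp (r₂ * |z.im|) :=
        (norm_add_le _ _).trans (add_le_add (hb₁ z) (hb₂ z))
    _ ≤ (M₁ + M₂) * Real.exp (max r₁ r₂ * |z.im|) := by nlinarith

lemma mul {f g : ℂ → ℂ} (hf : ExpType f) (hg : ExpType g) : ExpType fun z => f z * g z := by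
  obtain ⟨hfd, M₁, r₁, hM₁, hr₁, hb₁⟩ := hf
  obtain ⟨hgd, M₂, r₂, hM₂, hr₂, hb₂⟩ := hg
  refine ⟨hfd.mul hgd, M₁ * M₂, r₁ + r₂, by positivity, by positivity, fun z => ?_⟩
  calc ‖f z * g z‖ ≤ M₁ * Real.exp (r₁ * |z.im|) * (M₂ * Real.exp (r₂ * |z.im|)) := by
        rw [norm_mul]; exact mul_le_mul (hb₁ z) (hb₂ z) (norm_nonneg _) (by positivity)
    _ = M₁ * M₂ * Real.exp ((r₁ + r₂) * |z.im|) := by rw [add_mul, Real.exp_add]; ring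

lemma sum {ι : Type*} (s : Finset ι) {g : ι → ℂ → ℂ} (hg : ∀ j ∈ s, ExpType (g j)) :
    ExpType fun z => ∑ j ∈ s, g j z := by
  classical
  induction s using Finset.induction_on with
  | empty => simpa using const 0
  | insert a s ha ih =>
    simpa only [sum_insert ha] using
      (hg a (mem_insert_self a s)).add (ih fun j hj => hg j (mem_insert_of_mem hj))

lemma comp_add_const {f : ℂ → ℂ} (hf : ExpType f) (w : ℂ) : ExpType fun z => f (z + w) := by
  obtain ⟨hfd, M, r, hM, hr, hb⟩ := hf
  refine ⟨hfd.comp (differentiable_id.add_const w), M * Real.exp (r * |w.im|), r,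
    by positivity, hr, fun z => (hb (z + w)).trans ?_⟩
  rw [mul_assoc, ← Real.exp_add, ← mul_add, add_im]
  gcongr
  linarith [abs_add_le z.im w.im]

lemma conj_comp_conj {f : ℂ → ℂ} (hf : ExpType f) : ExpType fun z => conj (f (conj z)) := by
  obtain ⟨hfd, M, r, hM, hr, hb⟩ := hf
  refine ⟨fun z => ?_, M, r, hM, hr, fun z => ?_⟩
  · simpa [Function.comp_def] using (hfd (conj z)).conj_conj
  · simpa using hb (conj z)

end ExpType

namespace FinExpType

variable {V W : Type*} [AddCommGroup V] [Module ℂ V] [AddCommGroup W] [Module ℂ W]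

lemma of_fintype {ι : Type*} [Fintype ι] {f : ℂ → V} (v : ι → V) {g : ι → ℂ → ℂ}
    (hg : ∀ j, ExpType (g j)) (hf : ∀ z, f z = ∑ j, g j z • v j) : FinExpType f := by
  classical
  let e := Fintype.equivFin ι
  exact ⟨Fintype.card ι, v ∘ e.symm, g ∘ e.symm, fun j => hg _, fun z => by
    rw [hf z]; exact (e.symm.sum_comp fun i => g i z • v i).symm⟩

lemma const (v : V) : FinExpType fun _ : ℂ => v :=
  of_fintype (ι := Unit) (fun _ => v) (fun _ => ExpType.const 1) fun _ => by simp

lemma add {f g : ℂ → V} (hf : FinExpType f) (hg : FinExpType g) :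
    FinExpType fun z => f z + g z := by
  obtain ⟨n, v, gf, hgf, hfr⟩ := hf
  obtain ⟨m, w, gg, hgg, hgr⟩ := hg
  exact of_fintype (Sum.elim v w) (g := Sum.elim gf gg) (fun j => by cases j <;> simp [hgf, hgg])
    fun z => by simp [Fintype.sum_sum_type, hfr z, hgr z]

lemma map {𝓕 : Type*} [FunLike 𝓕 V W] [LinearMapClass 𝓕 ℂ V W] (T : 𝓕) {f : ℂ → V}
    (hf : FinExpType f) : FinExpType fun z => T (f z) := by
  obtain ⟨n, v, g, hg, hfr⟩ := hf
  exact of_fintype (fun j => T (v j)) hg fun z => by simp [hfr z, map_sum, map_smul]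

lemma sub {f g : ℂ → V} (hf : FinExpType f) (hg : FinExpType g) :
    FinExpType fun z => f z - g z := by
  simpa [sub_eq_add_neg] using hf.add (hg.map (-LinearMap.id : V →ₗ[ℂ] V))

lemma comp_add_const {f : ℂ → V} (hf : FinExpType f) (w : ℂ) :
    FinExpType fun z => f (z + w) := by
  obtain ⟨n, v, g, hg, hfr⟩ := hf
  exact of_fintype v (fun j => (hg j).comp_add_const w) fun z => hfr (z + w)

lemma mul {A : Type*} [Ring A] [Algebra ℂ A] {f g : ℂ → A} (hf : FinExpType f)
    (hg : FinExpType g) : FinExpType fun z => f z * g z := by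
  obtain ⟨n, v, gf, hgf, hfr⟩ := hf
  obtain ⟨m, w, gg, hgg, hgr⟩ := hg
  refine of_fintype (fun jk : Fin n × Fin m => v jk.1 * w jk.2)
    (fun jk => (hgf jk.1).mul (hgg jk.2)) fun z => ?_
  simp only [hfr z, hgr z, sum_mul_sum, Fintype.sum_prod_type, smul_mul_smul_comm]

lemma star_comp_conj [StarAddMonoid V] [StarModule ℂ V] {f : ℂ → V} (hf : FinExpType f) :
    FinExpType fun z => star (f (conj z)) := by
  obtain ⟨n, v, g, hg, hfr⟩ := hf
  exact of_fintype (fun j => star (v j)) (fun j => (hg j).conj_comp_conj) fun z => by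
    simp [hfr (conj z), star_sum, star_smul]

lemma expType {f : ℂ → ℂ} (hf : FinExpType f) : ExpType f := by
  obtain ⟨n, v, g, hg, hfr⟩ := hf
  convert ExpType.sum univ fun j _ => (hg j).mul (ExpType.const (v j)) using 1
  funext z
  simp [hfr z]

theorem eq_of_apply_nat_mul_I {f g : ℂ → V} (hf : FinExpType f) (hg : FinExpType g)
    (h : ∀ n : ℕ, f (n * I) = g (n * I)) : f = g := by
  funext z
  rw [← sub_eq_zero, ← Module.forall_dual_apply_eq_zero_iff ℂ]
  intro L
  have hL := ((hf.sub hg).map L).expType.eq_zero_of_apply_nat_mul_I fun n => by simp [h n]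
  exact congrFun hL z

end FinExpType

section Interpolation

variable {V : Type*} [AddCommGroup V] [Module ℂ V]

def InterpolatesOrbit (T : V → V) (b : V) (F : ℂ → V) : Prop :=
  FinExpType F ∧ ∀ n : ℕ, F (n * I) = T^[n] b

namespace InterpolatesOrbit

variable {b : V} {F : ℂ → V}

theorem unique {T : V → V} {G : ℂ → V} (hF : InterpolatesOrbit T b F)
    (hG : InterpolatesOrbit T b G) : F = G :=
  hF.1.eq_of_apply_nat_mul_I hG.1 fun n => (hF.2 n).trans (hG.2 n).symm

theorem apply_zero {T : V → V} (hF : InterpolatesOrbit T b F) : F 0 = b := by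
  simpa using hF.2 0

variable {𝓕 : Type*} [FunLike 𝓕 V V] [LinearMapClass 𝓕 ℂ V V] {T : 𝓕}

theorem iterate_apply (hF : InterpolatesOrbit T b F) (n : ℕ) (w : ℂ) :
    T^[n] (F w) = F (w + n * I) := by
  have hstep : (fun w => T (F w)) = fun w => F (w + I) :=
    (hF.1.map T).eq_of_apply_nat_mul_I (hF.1.comp_add_const I) fun n => by
      rw [hF.2 n, ← Function.iterate_succ_apply' T, ← hF.2 (n + 1)]
      push_cast
      ring_nf
  induction n generalizing w with
  | zero => simp
  | succ n ih =>
    rw [Function.iterate_succ_apply', ih, congrFun hstep]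
    push_cast
    ring_nf

theorem comp_add_const (hF : InterpolatesOrbit T b F) (z : ℂ) :
    InterpolatesOrbit T (F z) fun w => F (w + z) :=
  ⟨hF.1.comp_add_const z, fun n => by rw [hF.iterate_apply, add_comm]⟩

theorem add {a : V} {G : ℂ → V} (hF : InterpolatesOrbit T a F) (hG : InterpolatesOrbit T b G) :
    InterpolatesOrbit T (a + b) fun z => F z + G z :=
  ⟨hF.1.add hG.1, fun n => by rw [iterate_map_add, ← hF.2, ← hG.2]⟩

end InterpolatesOrbit

end Interpolation

lemma iterate_star_iterate_star {α : Type*} [InvolutiveStar α] {f : α → α}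
    (hf : ∀ x, f (star (f (star x))) = x) (n : ℕ) (x : α) :
    f^[n] (star (f^[n] (star x))) = x := by
  have hsemi : Function.Semiconj star f fun x => star (f (star x)) := fun x => by simp
  rw [hsemi.iterate_right n, star_star]
  exact Function.LeftInverse.iterate hf n x

section StarAlgebra

variable {B : Type*} [Ring B] [Algebra ℂ B] {φ : B →ₐ[ℂ] B}

theorem InterpolatesOrbit.mul {a b : B} {F G : ℂ → B} (hF : InterpolatesOrbit φ a F)
    (hG : InterpolatesOrbit φ b G) : InterpolatesOrbit φ (a * b) fun z => F z * G z :=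
  ⟨hF.1.mul hG.1, fun n => by rw [iterate_map_mul, ← hF.2, ← hG.2]⟩

theorem interpolatesOrbit_algebraMap (c : ℂ) :
    InterpolatesOrbit φ (algebraMap ℂ B c) fun _ => algebraMap ℂ B c :=
  ⟨FinExpType.const _, fun n => by rw [← AlgHom.coe_pow, AlgHom.commutes]⟩

variable [StarRing B] [StarModule ℂ B]

theorem InterpolatesOrbit.star_comp_conj (hφ : ∀ b : B, φ (star (φ (star b))) = b) {b : B}
    {F : ℂ → B} (hF : InterpolatesOrbit φ b F) :
    InterpolatesOrbit φ (star b) fun z => star (F (conj z)) := by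
  refine ⟨hF.1.star_comp_conj, fun n => ?_⟩
  have hback : φ^[n] (F (-(n * I))) = b := by rw [hF.iterate_apply, neg_add_cancel, hF.apply_zero]
  calc star (F (conj (n * I))) = star (F (-(n * I))) := by simp
    _ = φ^[n] (star (φ^[n] (star (star (F (-(n * I))))))) :=
      (iterate_star_iterate_star hφ n _).symm
    _ = φ^[n] (star b) := by rw [star_star, hback]

variable (φ) in
def interpolableStarSubalgebra (hφ : ∀ b : B, φ (star (φ (star b))) = b) :
    StarSubalgebra ℂ B where
  carrier := {b | ∃ F, InterpolatesOrbit φ b F}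
  mul_mem' := fun ⟨_, hF⟩ ⟨_, hG⟩ => ⟨_, hF.mul hG⟩
  add_mem' := fun ⟨_, hF⟩ ⟨_, hG⟩ => ⟨_, hF.add hG⟩
  algebraMap_mem' c := ⟨_, interpolatesOrbit_algebraMap c⟩
  star_mem' := fun ⟨_, hF⟩ => ⟨_, hF.star_comp_conj hφ⟩

theorem IsOneParamGroup.apply_zero {β : ℂ → B ≃ₐ[ℂ] B} (hβ : IsOneParamGroup β) (b : B) :
    β 0 b = b :=
  (β 0).injective (by rw [← hβ.1, add_zero])

theorem IsOneParamGroup.apply_nat_mul_I {β : ℂ → B ≃ₐ[ℂ] B} (hβ : IsOneParamGroup β)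
    (hI : ∀ b, β I b = φ b) (n : ℕ) (b : B) : β (n * I) b = φ^[n] b := by
  induction n with
  | zero => simpa using hβ.apply_zero b
  | succ n ih =>
    rw [Nat.cast_succ, add_one_mul, add_comm, hβ.1, ih, hI, Function.iterate_succ_apply']

end StarAlgebra

namespace OrbitInterpolation

variable {B : Type*} [Ring B] [Algebra ℂ B] {φ : B →ₐ[ℂ] B}
  (hall : ∀ b : B, ∃ F, InterpolatesOrbit φ b F)

noncomputable def interpolant (b : B) : ℂ → B :=
  (hall b).choose

theorem interpolatesOrbit_interpolant (b : B) : InterpolatesOrbit φ b (interpolant hall b) :=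
  (hall b).choose_spec

variable {hall} in
theorem _root_.InterpolatesOrbit.eq_interpolant {b : B} {F : ℂ → B}
    (hF : InterpolatesOrbit φ b F) (z : ℂ) : F z = interpolant hall b z :=
  congrFun (hF.unique (interpolatesOrbit_interpolant hall b)) z

theorem interpolant_algebraMap (c : ℂ) (z : ℂ) :
    interpolant hall (algebraMap ℂ B c) z = algebraMap ℂ B c :=
  ((interpolatesOrbit_algebraMap c).eq_interpolant z).symm

noncomputable def algHom (z : ℂ) : B →ₐ[ℂ] B where
  toFun b := interpolant hall b z
  map_one' := by simpa using interpolant_algebraMap hall 1 z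
  map_mul' a b :=
    (((interpolatesOrbit_interpolant hall a).mul
      (interpolatesOrbit_interpolant hall b)).eq_interpolant z).symm
  map_zero' := by simpa using interpolant_algebraMap hall 0 z
  map_add' a b :=
    (((interpolatesOrbit_interpolant hall a).add
      (interpolatesOrbit_interpolant hall b)).eq_interpolant z).symm
  commutes' c := interpolant_algebraMap hall c z

theorem algHom_algHom (y z : ℂ) (b : B) : algHom hall y (algHom hall z b) = algHom hall (y + z) b :=
  (((interpolatesOrbit_interpolant hall b).comp_add_const z).eq_interpolant y).symm

theorem algHom_zero (b : B) : algHom hall 0 b = b :=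
  (interpolatesOrbit_interpolant hall b).apply_zero

noncomputable def oneParamGroup (z : ℂ) : B ≃ₐ[ℂ] B :=
  AlgEquiv.ofAlgHom (algHom hall z) (algHom hall (-z))
    (AlgHom.ext fun b => by simp [algHom_algHom, algHom_zero])
    (AlgHom.ext fun b => by simp [algHom_algHom, algHom_zero])

theorem oneParamGroup_apply (z : ℂ) (b : B) : oneParamGroup hall z b = interpolant hall b z :=
  rfl

theorem oneParamGroup_I (b : B) : oneParamGroup hall I b = φ b := by
  rw [oneParamGroup_apply]
  simpa using (interpolatesOrbit_interpolant hall b).2 1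

theorem isExpOneParamGroup_oneParamGroup [StarRing B] [StarModule ℂ B]
    (hφ : ∀ b : B, φ (star (φ (star b))) = b) : IsExpOneParamGroup (oneParamGroup hall) := by
  refine ⟨⟨fun y z b => (algHom_algHom hall y z b).symm, fun z b => ?_⟩,
    fun b => (interpolatesOrbit_interpolant hall b).1⟩
  simpa [oneParamGroup_apply] using
    (((interpolatesOrbit_interpolant hall b).star_comp_conj hφ).eq_interpolant (conj z))

end OrbitInterpolation

/-- Theorem A.1 of the paper: if `φ` is a unital algebra endomorphism of a unital complex
*-algebra `B` with `φ (φ (b*)*) = b`, and for every `b` in a generating set `S` the orbit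
`n ↦ φⁿ b` interpolates to a function of finite exponential type, then `φ` is the value at `i`
of a unique exponential one-parameter group on `B`. -/
theorem exists_unique_exp_one_param_group_of_generators
    {B : Type*} [Ring B] [Algebra ℂ B] [StarRing B] [StarModule ℂ B]
    (S : Set B) (hS : StarAlgebra.adjoin ℂ S = ⊤)
    (φ : B →ₐ[ℂ] B) (hφ : ∀ b : B, φ (star (φ (star b))) = b)
    (hexp : ∀ b ∈ S, ∃ f : ℂ → B, FinExpType f ∧
      ∀ n : ℕ, f (n * Complex.I) = (⇑φ)^[n] b) :
    ∃! β : ℂ → (B ≃ₐ[ℂ] B), IsExpOneParamGroup β ∧ ∀ b : B, β Complex.I b = φ b := by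
  have hall : ∀ b : B, ∃ F, InterpolatesOrbit φ b F := fun b =>
    StarAlgebra.adjoin_le (S := interpolableStarSubalgebra φ hφ) hexp (hS ▸ trivial)
  refine ⟨OrbitInterpolation.oneParamGroup hall,
    ⟨OrbitInterpolation.isExpOneParamGroup_oneParamGroup hall hφ,
      OrbitInterpolation.oneParamGroup_I hall⟩, ?_⟩
  rintro β ⟨⟨hβ, hfin⟩, hI⟩
  ext z b
  exact InterpolatesOrbit.eq_interpolant ⟨hfin b, fun n => hβ.apply_nat_mul_I hI n b⟩ z
end

section
/- Fix a real number q with 0 < q < 1 and a half-integer m ≥ 1/2. Then: (i) the real symmetric 2×2 matrix [[−q⁷λ_{−m}, −q⁷c_{−m+1}], [−q⁷c_{−m+1}, q⁵]] has determinant 0, and its eigenvalues are exactly 0 and q⁵ − q⁷λ_{−m}; (ii) the real symmetric 2×2 matrix [[q⁵, −q⁴c_m], [−q⁴c_m, q³λ_m]] has determinant 0, and its eigenvalues are exactly 0 and q⁵ + q³λ_m. -/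
/-- `lam q k` is the quantity `λ_k = q² (q^{-4k} - 1)/(1 - q²)` (real exponents via `rpow`). -/
noncomputable def lam (q k : ℝ) : ℝ := q ^ 2 * (q ^ (-4 * k) - 1) / (1 - q ^ 2)

/-- `cc q m k` is the quantity `c_k` of the spin-`m` representation of quantum `SU_q(2)`:
`c_k = q (1-q²)⁻¹ √((q^{-2k} - q^{2m})(q^{-2m} - q^{-2(k-1)}))` for `-m ≤ k ≤ m`, and `0`
otherwise (in particular `c_{-m-1} = c_{m+1} = 0`). -/
noncomputable def cc (q m k : ℝ) : ℝ :=
  if -m ≤ k ∧ k ≤ m then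
    q / (1 - q ^ 2) *
      Real.sqrt ((q ^ (-2 * k) - q ^ (2 * m)) * (q ^ (-2 * m) - q ^ (-2 * (k - 1))))
  else 0

/-- `nu q m k` is the Laplacian eigenvalue `ν_k = c_{k+1}² + λ_k² + q² c_k²`. -/
noncomputable def nu (q m k : ℝ) : ℝ :=
  cc q m (k + 1) ^ 2 + lam q k ^ 2 + q ^ 2 * cc q m k ^ 2

/-- `k` is a half-integer. -/
def IsHalfInt (k : ℝ) : Prop := ∃ n : ℤ, 2 * k = (n : ℝ)

/-!
Both blocks are singular: with `t = q^{2m}` the radicands collapse, giving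
`q² c_{-m+1}² = -λ_{-m}` and `c_m² = λ_m`, i.e. the square of the off-diagonal entry equals
the product of the diagonal ones. The characteristic polynomial of a singular `2 × 2` matrix
is `μ (μ - trace)`, so its eigenvalues are `0` and the trace.
-/

namespace Matrix

theorem exists_mulVec_eq_smul_iff_det_eq_zero {n R : Type*} [Fintype n] [DecidableEq n]
    [CommRing R] [IsDomain R] (M : Matrix n n R) (μ : R) :
    (∃ v ≠ 0, M *ᵥ v = μ • v) ↔ (M - μ • 1).det = 0 := by
  rw [← exists_mulVec_eq_zero_iff]
  simp only [sub_mulVec, smul_mulVec, one_mulVec, sub_eq_zero]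

theorem setOf_eigenvalue_fin_two_of_det_eq_zero {R : Type*} [CommRing R] [IsDomain R]
    {a b c d : R} (h : (!![a, b; c, d]).det = 0) :
    {μ : R | ∃ v ≠ 0, !![a, b; c, d] *ᵥ v = μ • v} = {0, a + d} := by
  ext μ
  rw [det_fin_two_of] at h
  have hchar : (!![a, b; c, d] - μ • 1).det = μ * (μ - (a + d)) := by
    rw [det_fin_two]
    simp only [Fin.isValue, sub_apply, of_apply, cons_val', cons_val_zero, cons_val_fin_one,
      smul_apply, one_apply_eq, smul_eq_mul, mul_one, cons_val_one, ne_eq, zero_ne_one,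
      not_false_eq_true, one_apply_ne, mul_zero, sub_zero, one_ne_zero]
    linear_combination h
  simp only [Set.mem_ofPred_eq, exists_mulVec_eq_smul_iff_det_eq_zero, hchar, mul_eq_zero,
    sub_eq_zero, Set.mem_insert_iff, Set.mem_singleton_iff]

end Matrix

theorem cc_sq {q m k : ℝ} (hq0 : 0 < q) (hq1 : q < 1) (hmk : -m ≤ k) (hkm : k ≤ m) :
    cc q m k ^ 2 = q ^ 2 / (1 - q ^ 2) ^ 2 *
      ((q ^ (-2 * k) - q ^ (2 * m)) * (q ^ (-2 * m) - q ^ (-2 * (k - 1)))) := by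
  have hrad : 0 ≤ (q ^ (-2 * k) - q ^ (2 * m)) * (q ^ (-2 * m) - q ^ (-2 * (k - 1))) :=
    mul_nonneg (sub_nonneg.2 (Real.rpow_le_rpow_of_exponent_ge hq0 hq1.le (by linarith)))
      (sub_nonneg.2 (Real.rpow_le_rpow_of_exponent_ge hq0 hq1.le (by linarith)))
  rw [cc, if_pos ⟨hmk, hkm⟩, mul_pow, div_pow, Real.sq_sqrt hrad]

theorem sq_mul_cc_neg_add_one_sq {q m : ℝ} (hq0 : 0 < q) (hq1 : q < 1) (hm : 1 / 2 ≤ m) :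
    q ^ 2 * cc q m (-m + 1) ^ 2 = -lam q (-m) := by
  set t := q ^ (2 * m)
  have hqk : q ^ (-2 * (-m + 1)) = t / q ^ 2 := by
    rw [show -2 * (-m + 1) = 2 * m - (2 : ℕ) by push_cast; ring,
      Real.rpow_sub_natCast hq0.ne']
  have hqm : q ^ (-2 * m) = t⁻¹ := by rw [neg_mul, Real.rpow_neg hq0.le]
  have hqk1 : q ^ (-2 * (-m + 1 - 1)) = t := by rw [show -2 * (-m + 1 - 1) = 2 * m by ring]
  have hq4k : q ^ (-4 * -m) = t ^ 2 := by
    rw [show -4 * -m = 2 * m * (2 : ℕ) by push_cast; ring, Real.rpow_mul_natCast hq0.le]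
  have ht : 0 < t := Real.rpow_pos_of_pos hq0 _
  have hq2 : 1 - q ^ 2 ≠ 0 := by nlinarith
  rw [cc_sq hq0 hq1 (by linarith) (by linarith), lam, hqk, hqm, hqk1, hq4k]
  field_simp
  ring

theorem cc_self_sq {q m : ℝ} (hq0 : 0 < q) (hq1 : q < 1) (hm : 0 ≤ m) :
    cc q m m ^ 2 = lam q m := by
  set t := q ^ (2 * m)
  have hqm : q ^ (-2 * m) = t⁻¹ := by rw [neg_mul, Real.rpow_neg hq0.le]
  have hqk1 : q ^ (-2 * (m - 1)) = t⁻¹ * q ^ 2 := by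
    rw [show -2 * (m - 1) = -(2 * m) + (2 : ℕ) by push_cast; ring,
      Real.rpow_add_natCast hq0.ne', Real.rpow_neg hq0.le]
  have hq4k : q ^ (-4 * m) = t⁻¹ ^ 2 := by
    rw [show -4 * m = -(2 * m) * (2 : ℕ) by push_cast; ring, Real.rpow_mul_natCast hq0.le,
      Real.rpow_neg hq0.le]
  have ht : 0 < t := Real.rpow_pos_of_pos hq0 _
  have hq2 : 1 - q ^ 2 ≠ 0 := by nlinarith
  rw [cc_sq hq0 hq1 (by linarith) le_rfl, lam, hqm, hqk1, hq4k]
  field_simp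
  ring

theorem eigenvalues_of_T_two_dim_blocks_general
    (q : ℝ) (hq0 : 0 < q) (hq1 : q < 1)
    (m : ℝ) (hm0 : 1 / 2 ≤ m) :
    let A : Matrix (Fin 2) (Fin 2) ℝ :=
      !![-(q ^ 7) * lam q (-m), -(q ^ 7) * cc q m (-m + 1);
         -(q ^ 7) * cc q m (-m + 1), q ^ 5]
    let B : Matrix (Fin 2) (Fin 2) ℝ :=
      !![q ^ 5, -(q ^ 4) * cc q m m;
         -(q ^ 4) * cc q m m, q ^ 3 * lam q m]
    (A.det = 0 ∧
      {μ : ℝ | ∃ v : Fin 2 → ℝ, v ≠ 0 ∧ A.mulVec v = μ • v} =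
        {0, q ^ 5 - q ^ 7 * lam q (-m)}) ∧
    (B.det = 0 ∧
      {μ : ℝ | ∃ v : Fin 2 → ℝ, v ≠ 0 ∧ B.mulVec v = μ • v} =
        {0, q ^ 5 + q ^ 3 * lam q m}) := by
  intro A B
  have hA : A.det = 0 := by
    rw [Matrix.det_fin_two_of]
    linear_combination (-q ^ 12) * sq_mul_cc_neg_add_one_sq hq0 hq1 hm0
  have hB : B.det = 0 := by
    rw [Matrix.det_fin_two_of]
    linear_combination (-q ^ 8) * cc_self_sq (m := m) hq0 hq1 (by linarith)
  refine ⟨⟨hA, ?_⟩, ⟨hB, Matrix.setOf_eigenvalue_fin_two_of_det_eq_zero hB⟩⟩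
  rw [Matrix.setOf_eigenvalue_fin_two_of_det_eq_zero hA]
  ring_nf

/-- Section 8 of the paper: on the 2-dimensional invariant blocks (`k = -m` and `k = m`), the
matrices of the operator `T = L ∘ d` have determinant `0`, and their eigenvalues are exactly
`0` and `q⁵ - q⁷ λ_{-m}`, respectively `0` and `q⁵ + q³ λ_m`. -/
theorem eigenvalues_of_T_two_dim_blocks
    (q : ℝ) (hq0 : 0 < q) (hq1 : q < 1)
    (m : ℝ) (hm : IsHalfInt m) (hm0 : 1 / 2 ≤ m) :
    let A : Matrix (Fin 2) (Fin 2) ℝ :=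
      !![-(q ^ 7) * lam q (-m), -(q ^ 7) * cc q m (-m + 1);
         -(q ^ 7) * cc q m (-m + 1), q ^ 5]
    let B : Matrix (Fin 2) (Fin 2) ℝ :=
      !![q ^ 5, -(q ^ 4) * cc q m m;
         -(q ^ 4) * cc q m m, q ^ 3 * lam q m]
    (A.det = 0 ∧
      {μ : ℝ | ∃ v : Fin 2 → ℝ, v ≠ 0 ∧ A.mulVec v = μ • v} =
        {0, q ^ 5 - q ^ 7 * lam q (-m)}) ∧
    (B.det = 0 ∧
      {μ : ℝ | ∃ v : Fin 2 → ℝ, v ≠ 0 ∧ B.mulVec v = μ • v} =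
        {0, q ^ 5 + q ^ 3 * lam q m}) :=
  eigenvalues_of_T_two_dim_blocks_general q hq0 hq1 m hm0
end
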